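/- Let X be a δ-hyperbolic geodesic metric space, let f ∈ Isom(X) be a hyperbolic isometry with attracting fixed point A_+ and repelling fixed point A_- in ∂X, and let g ∈ Isom(X) fix a point p ∈ X and satisfy g A_- = A_-. Let D ≥ 0 be a constant with (f^{−k} p · f^{k} p)_p ≤ D for all k ∈ ℕ (such D exists since A_+ ≠ A_-). Then for every n ∈ ℤ there is a constant K_n ≥ 0 such that (g^n f^{−k} p · f^{k} p)_p ≤ D + δ and (f^{−k} p · g^n f^{k} p)_p ≤ D + δ for all k ≥ K_n. -/

import Mathlib

open Filter Metric Set

noncomputable section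

universe u

variable {X : Type u} [MetricSpace X]

/-- The Gromov product `(x·y)_w = ½(d(x,w) + d(w,y) − d(x,y))`. -/
def gromovProduct (w x y : X) : ℝ := (dist x w + dist w y - dist x y) / 2

/-- `γ` is a geodesic from `x` to `y`, parametrized by arc length on `[0, dist x y]`. -/
structure IsGeodesicSegment (γ : ℝ → X) (x y : X) : Prop where
  source : γ 0 = x
  target : γ (dist x y) = y
  isom : ∀ ⦃s t : ℝ⦄, s ∈ Set.Icc (0 : ℝ) (dist x y) → t ∈ Set.Icc (0 : ℝ) (dist x y) →
    dist (γ s) (γ t) = |s - t|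

/-- A geodesic metric space is `δ`-hyperbolic: every pair of points is joined by a
geodesic, every geodesic triangle is `δ`-slim, every geodesic triangle has insize at
most `δ`, and the Gromov product is `δ`-hyperbolic. -/
structure IsDeltaHyperbolic (X : Type u) [MetricSpace X] (δ : ℝ) : Prop where
  delta_nonneg : 0 ≤ δ
  geodesic : ∀ x y : X, ∃ γ : ℝ → X, IsGeodesicSegment γ x y
  slim : ∀ (x y z : X) (α β γ : ℝ → X),
    IsGeodesicSegment α y z → IsGeodesicSegment β z x → IsGeodesicSegment γ x y →
    ∀ s ∈ Set.Icc (0 : ℝ) (dist y z),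
      (∃ t ∈ Set.Icc (0 : ℝ) (dist z x), dist (α s) (β t) ≤ δ) ∨
      (∃ t ∈ Set.Icc (0 : ℝ) (dist x y), dist (α s) (γ t) ≤ δ)
  insize : ∀ (x y z : X) (α β γ : ℝ → X),
    IsGeodesicSegment α y z → IsGeodesicSegment β z x → IsGeodesicSegment γ x y →
    dist (α (gromovProduct y x z)) (β (gromovProduct z x y)) ≤ δ ∧
    dist (β (gromovProduct z x y)) (γ (gromovProduct x y z)) ≤ δ ∧
    dist (γ (gromovProduct x y z)) (α (gromovProduct y x z)) ≤ δ
  gromov : ∀ w x y z : X,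
    min (gromovProduct w x y) (gromovProduct w y z) - δ ≤ gromovProduct w x z

/-- An isometry `f` of `X` is hyperbolic if for every `x ∈ X` there is `t > 0` with
`t|m − n| ≤ d(f^m x, f^n x)` for all integers `m, n`. -/
def IsHyperbolicIsometry (f : X ≃ᵢ X) : Prop :=
  ∀ x : X, ∃ t : ℝ, 0 < t ∧
    ∀ m n : ℤ, t * |(m : ℝ) - (n : ℝ)| ≤ dist ((f ^ m) x) ((f ^ n) x)

/-- A sequence converges to infinity if the Gromov products `(x_i·x_j)_w → ∞`. -/
def ConvergesToInfinity (w : X) (u : ℕ → X) : Prop :=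
  Tendsto (fun p : ℕ × ℕ => gromovProduct w (u p.1) (u p.2)) atTop atTop

/-- Two sequences are equivalent if the mixed Gromov products tend to infinity. -/
def SeqEquiv (w : X) (u v : ℕ → X) : Prop :=
  Tendsto (fun p : ℕ × ℕ => gromovProduct w (u p.1) (v p.2)) atTop atTop

/-- Sequences converging to infinity. -/
def BoundarySeq (w : X) : Type u := {u : ℕ → X // ConvergesToInfinity w u}

/-- The Gromov boundary `∂X`: equivalence classes of sequences converging to infinity. -/
def GromovBoundary (w : X) : Type u :=
  Quot (fun u v : BoundarySeq w => SeqEquiv w u.1 v.1)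

/-- The boundary point determined by a sequence converging to infinity. -/
def boundaryPt (w : X) (u : BoundarySeq w) : GromovBoundary w := Quot.mk _ u

/-- `X̄ = X ∪ ∂X`. -/
def GromovClosure (w : X) : Type u := X ⊕ GromovBoundary w

theorem gromovProduct_basepoint_ge (w w' x y : X) :
    gromovProduct w x y - dist w w' ≤ gromovProduct w' x y := by
  have h1 : |dist w' x - dist w x| ≤ dist w' w := abs_dist_sub_le w' w x
  have h2 : |dist w' y - dist w y| ≤ dist w' w := abs_dist_sub_le w' w y
  rw [abs_le] at h1 h2
  unfold gromovProduct
  rw [dist_comm x w', dist_comm x w, dist_comm w w']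
  linarith [h1.1, h1.2, h2.1, h2.2]

theorem gromovProduct_isometry (f : X ≃ᵢ X) (w x y : X) :
    gromovProduct w (f x) (f y) = gromovProduct (f.symm w) x y := by
  unfold gromovProduct
  conv_lhs => rw [show w = f (f.symm w) from (f.apply_symm_apply w).symm]
  rw [f.dist_eq, f.dist_eq, f.dist_eq]

theorem convergesToInfinity_isometry {w : X} (f : X ≃ᵢ X) {u : ℕ → X}
    (h : ConvergesToInfinity w u) :
    ConvergesToInfinity w (fun n => f (u n)) := by
  refine tendsto_atTop_mono (fun p => ?_)
    (tendsto_atTop_add_const_right atTop (-dist w (f.symm w)) h)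
  have h1 := gromovProduct_basepoint_ge w (f.symm w) (u p.1) (u p.2)
  have h2 := gromovProduct_isometry f w (u p.1) (u p.2)
  dsimp only
  linarith

theorem seqEquiv_isometry {w : X} (f : X ≃ᵢ X) {u v : ℕ → X}
    (h : SeqEquiv w u v) :
    SeqEquiv w (fun n => f (u n)) (fun n => f (v n)) := by
  refine tendsto_atTop_mono (fun p => ?_)
    (tendsto_atTop_add_const_right atTop (-dist w (f.symm w)) h)
  have h1 := gromovProduct_basepoint_ge w (f.symm w) (u p.1) (v p.2)
  have h2 := gromovProduct_isometry f w (u p.1) (v p.2)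
  dsimp only
  linarith

/-- The extension of an isometry of `X` to the Gromov boundary. -/
def boundaryMap (w : X) (f : X ≃ᵢ X) : GromovBoundary w → GromovBoundary w :=
  Quot.lift
    (fun u : BoundarySeq w =>
      boundaryPt w ⟨fun n => f (u.1 n), convergesToInfinity_isometry f u.2⟩)
    (fun _ _ h => Quot.sound (seqEquiv_isometry f h))

/-- The extension of an isometry of `X` to `X̄ = X ∪ ∂X`. -/
def closureMap (w : X) (f : X ≃ᵢ X) : GromovClosure w → GromovClosure w
  | Sum.inl x => Sum.inl (f x)
  | Sum.inr a => Sum.inr (boundaryMap w f a)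

/-- The Gromov product of a boundary point with a point of `X̄`, extended by
taking infima of liminfs over representative sequences. -/
noncomputable def boundaryGP (w : X) (a : GromovBoundary w) : GromovClosure w → ℝ
  | Sum.inl p => sInf {r : ℝ | ∃ u : BoundarySeq w, boundaryPt w u = a ∧
      r = Filter.liminf (fun n => gromovProduct w (u.1 n) p) atTop}
  | Sum.inr b => sInf {r : ℝ | ∃ u v : BoundarySeq w, boundaryPt w u = a ∧
      boundaryPt w v = b ∧
      r = Filter.liminf (fun n => gromovProduct w (u.1 n) (v.1 n)) atTop}

/-- The basis for the topology on `X̄`: open balls in `X`, and the sets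
`N(â,k) = {y : (â·y)_w > k}` for boundary points `â` and `k > 0`. -/
def closureBasis (w : X) : Set (Set (GromovClosure w)) :=
  {S | (∃ (x : X) (r : ℝ), 0 < r ∧ S = Sum.inl '' Metric.ball x r) ∨
       (∃ (a : GromovBoundary w) (k : ℝ), 0 < k ∧ S = {y | k < boundaryGP w a y})}

/-- The topology on `X̄` generated by the basis above. -/
def closureTop (w : X) : TopologicalSpace (GromovClosure w) :=
  TopologicalSpace.generateFrom (closureBasis w)

/-- `S ⊆ X̄` is a neighborhood of `p ∈ X̄`. -/
def IsNeighborhood (w : X) (S : Set (GromovClosure w)) (p : GromovClosure w) : Prop :=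
  S ∈ @nhds (GromovClosure w) (closureTop w) p

/-- `a ∈ ∂X` is the attracting fixed point of `f`: it is represented by the
sequence `(f^n x)` for a point `x ∈ X`. -/
def IsAttractingFixedPt (w : X) (f : X ≃ᵢ X) (a : GromovBoundary w) : Prop :=
  ∃ (x : X) (h : ConvergesToInfinity w (fun n : ℕ => (f ^ (n : ℤ)) x)),
    boundaryPt w ⟨fun n : ℕ => (f ^ (n : ℤ)) x, h⟩ = a

/-- `a ∈ ∂X` is the repelling fixed point of `f`: the attracting fixed point of `f⁻¹`. -/
def IsRepellingFixedPt (w : X) (f : X ≃ᵢ X) (a : GromovBoundary w) : Prop :=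
  IsAttractingFixedPt w f⁻¹ a

/-- The concatenation `α · (f α)` of a path `α` defined on `[0, L]` with its
image under `f`, parametrized on `[0, 2L]`. -/
noncomputable def concatPath (f : X ≃ᵢ X) (α : ℝ → X) (L : ℝ) : ℝ → X :=
  fun s => if s ≤ L then α s else f (α (s - L))


/-! Since `g` fixes `A₋`, the sequences `gⁿ f⁻ᵏ p` and `f⁻ᵏ p` represent the same boundary point,
so `(gⁿ f⁻ᵏ p · f⁻ᵏ p)_p → ∞`. The four-point condition for `gⁿ f⁻ᵏ p`, `f⁻ᵏ p`, `fᵏ p` then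
forces `(gⁿ f⁻ᵏ p · fᵏ p)_p ≤ (f⁻ᵏ p · fᵏ p)_p + δ ≤ D + δ` for large `k`. The second inequality
is the first one for `-n`, moved by the isometry `gⁿ`, which fixes `p`. -/

theorem gromovProduct_comm (w x y : X) : gromovProduct w x y = gromovProduct w y x := by
  unfold gromovProduct
  rw [dist_comm x w, dist_comm w y, dist_comm x y]
  ring

theorem gromovProduct_sub_dist_le (w x x' y y' : X) :
    gromovProduct w x y - dist x x' - dist y y' ≤ gromovProduct w x' y' := by
  unfold gromovProduct
  linarith [dist_triangle x x' w, dist_triangle w y' y, dist_triangle4 x' x y y',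
    dist_comm x x', dist_comm y y']

theorem gromovProduct_le_add_of_lt {δ D : ℝ} {p a b c : X}
    (hG : min (gromovProduct p a c) (gromovProduct p c b) - δ ≤ gromovProduct p a b)
    (hab : gromovProduct p a b ≤ D) (hca : D + δ < gromovProduct p c a) :
    gromovProduct p c b ≤ D + δ := by
  rw [gromovProduct_comm p a c] at hG
  rcases min_cases (gromovProduct p c a) (gromovProduct p c b) with ⟨he, _⟩ | ⟨he, _⟩ <;>
    rw [he] at hG <;> linarith

instance IsometryEquiv.applyMulAction : MulAction (X ≃ᵢ X) X where
  smul e x := e x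
  one_smul _ := rfl
  mul_smul _ _ _ := rfl

theorem gromovProduct_apply_of_apply_eq {e : X ≃ᵢ X} {p : X} (hp : e p = p) (x y : X) :
    gromovProduct p (e x) (e y) = gromovProduct p x y := by
  rw [gromovProduct_isometry, e.symm_apply_eq.mpr hp.symm]

namespace SeqEquiv

variable {w : X} {u u' v v' : ℕ → X}

theorem symm (h : SeqEquiv w u v) : SeqEquiv w v u := by
  have hswap : Tendsto (Prod.swap : ℕ × ℕ → ℕ × ℕ) atTop atTop := by
    rw [← prod_atTop_atTop_eq]
    exact tendsto_prod_swap
  exact (h.comp hswap).congr fun q => gromovProduct_comm w _ _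

theorem trans {δ : ℝ}
    (hG : ∀ x y z : X, min (gromovProduct w x y) (gromovProduct w y z) - δ ≤ gromovProduct w x z)
    {x : ℕ → X} (huv : SeqEquiv w u v) (hvx : SeqEquiv w v x) : SeqEquiv w u x := by
  rw [SeqEquiv, tendsto_atTop_atTop] at huv hvx ⊢
  intro b
  obtain ⟨N, hN⟩ := huv (b + δ)
  obtain ⟨M, hM⟩ := hvx (b + δ)
  refine ⟨(N.1, M.2), fun a ha => ?_⟩
  have hu := hN (a.1, max N.2 M.1) ⟨ha.1, le_max_left _ _⟩
  have hx := hM (max N.2 M.1, a.2) ⟨le_max_right _ _, ha.2⟩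
  linarith [hG (u a.1) (v (max N.2 M.1)) (x a.2), le_min hu hx]

theorem of_dist_le (C : ℝ) (hu : ∀ n, dist (u n) (u' n) ≤ C) (hv : ∀ n, dist (v n) (v' n) ≤ C)
    (h : SeqEquiv w u v) : SeqEquiv w u' v' :=
  tendsto_atTop_mono (fun q => by
      linarith [gromovProduct_sub_dist_le w (u q.1) (u' q.1) (v q.2) (v' q.2), hu q.1, hv q.2])
    (tendsto_atTop_add_const_right atTop (-C - C) h)

theorem tendsto_gromovProduct_diag (h : SeqEquiv w u v) (p : X) :
    Tendsto (fun k => gromovProduct p (u k) (v k)) atTop atTop := by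
  have hdiag : Tendsto (fun k => gromovProduct w (u k) (v k)) atTop atTop :=
    h.comp tendsto_atTop_diagonal
  exact tendsto_atTop_mono (fun k => by
      linarith [gromovProduct_basepoint_ge w p (u k) (v k)])
    (tendsto_atTop_add_const_right atTop (-dist w p) hdiag)

end SeqEquiv

theorem seqEquiv_of_boundaryPt_eq {δ : ℝ} {w : X}
    (hG : ∀ x y z : X, min (gromovProduct w x y) (gromovProduct w y z) - δ ≤ gromovProduct w x z)
    {a b : BoundarySeq w} (h : boundaryPt w a = boundaryPt w b) : SeqEquiv w a.1 b.1 :=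
  have hequiv : Equivalence fun a b : BoundarySeq w => SeqEquiv w a.1 b.1 :=
    ⟨fun a => a.2, SeqEquiv.symm, SeqEquiv.trans hG⟩
  hequiv.eqvGen_iff.mp (Quot.eqvGen_exact h)

instance GromovBoundary.mulAction (w : X) : MulAction (X ≃ᵢ X) (GromovBoundary w) where
  smul := boundaryMap w
  one_smul := Quot.ind fun _ => rfl
  mul_smul _ _ := Quot.ind fun _ => rfl

theorem SeqEquiv.of_smul_boundaryPt_eq {δ : ℝ} {w : X}
    (hG : ∀ x y z : X, min (gromovProduct w x y) (gromovProduct w y z) - δ ≤ gromovProduct w x z)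
    {e : X ≃ᵢ X} {u : BoundarySeq w} (he : e • boundaryPt w u = boundaryPt w u) :
    SeqEquiv w (fun k => e (u.1 k)) u.1 :=
  seqEquiv_of_boundaryPt_eq hG (a := ⟨_, convergesToInfinity_isometry e u.2⟩) he

theorem IsRepellingFixedPt.exists_boundaryPt_eq {w : X} {f : X ≃ᵢ X} {A : GromovBoundary w}
    (hA : IsRepellingFixedPt w f A) (p : X) :
    ∃ h : ConvergesToInfinity w (fun k : ℕ => (f ^ (-(k : ℤ))) p),
      boundaryPt w ⟨fun k : ℕ => (f ^ (-(k : ℤ))) p, h⟩ = A := by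
  obtain ⟨x, hx, rfl⟩ := hA
  set u : ℕ → X := fun k => (f⁻¹ ^ (k : ℤ)) x with hu
  set v : ℕ → X := fun k => (f ^ (-(k : ℤ))) p with hv
  have hdist (k : ℕ) : dist (u k) (v k) = dist x p := by
    simp only [hu, hv, inv_zpow']
    exact (f ^ (-(k : ℤ))).dist_eq x p
  have hxp : SeqEquiv w u v :=
    SeqEquiv.of_dist_le (dist x p) (fun k => by simp) (fun k => (hdist k).le) hx
  exact ⟨SeqEquiv.of_dist_le (dist x p) (fun k => (hdist k).le) (fun k => by simp) hxp,
    Quot.sound hxp.symm⟩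

theorem eventually_gromovProduct_zpow_le {δ : ℝ} (hX : IsDeltaHyperbolic X δ) {w : X}
    {f : X ≃ᵢ X} {A : GromovBoundary w} (hA : IsRepellingFixedPt w f A) {g : X ≃ᵢ X}
    (hgA : boundaryMap w g A = A) {p : X} {D : ℝ}
    (hD : ∀ k : ℕ, gromovProduct p ((f ^ (-(k : ℤ))) p) ((f ^ (k : ℤ)) p) ≤ D) (n : ℤ) :
    ∀ᶠ k : ℕ in atTop, gromovProduct p ((g ^ n) ((f ^ (-(k : ℤ))) p)) ((f ^ (k : ℤ)) p) ≤ D + δ := by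
  obtain ⟨hu, rfl⟩ := hA.exists_boundaryPt_eq p
  have hequiv := SeqEquiv.of_smul_boundaryPt_eq (hX.gromov w)
    (smul_eq_self_of_mem_zpowers (Subgroup.zpow_mem_zpowers g n) hgA)
  filter_upwards [(hequiv.tendsto_gromovProduct_diag p).eventually_gt_atTop (D + δ)] with k hk
  exact gromovProduct_le_add_of_lt (hX.gromov p _ _ _) (hD k) hk

theorem gromov_product_bound_elliptic_general (δ : ℝ) (hX : IsDeltaHyperbolic X δ) (w : X)
    (f : X ≃ᵢ X)
    (Aminus : GromovBoundary w)
    (hAm : IsRepellingFixedPt w f Aminus)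
    (g : X ≃ᵢ X) (p : X) (hp : g p = p)
    (hgA : boundaryMap w g Aminus = Aminus)
    (D : ℝ)
    (hDbd : ∀ k : ℕ, gromovProduct p ((f ^ (-(k : ℤ))) p) ((f ^ (k : ℤ)) p) ≤ D) :
    ∀ n : ℤ, ∃ K : ℕ, ∀ k : ℕ, K ≤ k →
      gromovProduct p ((g ^ n) ((f ^ (-(k : ℤ))) p)) ((f ^ (k : ℤ)) p) ≤ D + δ ∧
      gromovProduct p ((f ^ (-(k : ℤ))) p) ((g ^ n) ((f ^ (k : ℤ)) p)) ≤ D + δ := by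
  intro n
  have hgnp : (g ^ n) p = p := smul_eq_self_of_mem_zpowers (Subgroup.zpow_mem_zpowers g n) hp
  have bound := eventually_gromovProduct_zpow_le hX hAm hgA hDbd
  refine eventually_atTop.mp ((bound n).and ((bound (-n)).mono fun k hk => ?_))
  rwa [← gromovProduct_apply_of_apply_eq hgnp, zpow_neg, IsometryEquiv.apply_inv_self] at hk

/-- Let `f` be hyperbolic with fixed points `A₊`, `A₋`, let `g` fix
a point `p ∈ X` and satisfy `g A₋ = A₋`, and let `D ≥ 0` bound all Gromov
products `(f^{-k}p · f^k p)_p`. Then for every `n ∈ ℤ` there is `Kₙ ≥ 0` such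
that `(gⁿ f^{-k} p · f^k p)_p ≤ D + δ` and `(f^{-k} p · gⁿ f^k p)_p ≤ D + δ`
for all `k ≥ Kₙ`. -/
theorem gromov_product_bound_elliptic (δ : ℝ) (hX : IsDeltaHyperbolic X δ) (w : X)
    (f : X ≃ᵢ X) (hf : IsHyperbolicIsometry f)
    (Aplus Aminus : GromovBoundary w)
    (hAp : IsAttractingFixedPt w f Aplus) (hAm : IsRepellingFixedPt w f Aminus)
    (g : X ≃ᵢ X) (p : X) (hp : g p = p)
    (hgA : boundaryMap w g Aminus = Aminus)
    (D : ℝ) (hD : 0 ≤ D)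
    (hDbd : ∀ k : ℕ, gromovProduct p ((f ^ (-(k : ℤ))) p) ((f ^ (k : ℤ)) p) ≤ D) :
    ∀ n : ℤ, ∃ K : ℕ, ∀ k : ℕ, K ≤ k →
      gromovProduct p ((g ^ n) ((f ^ (-(k : ℤ))) p)) ((f ^ (k : ℤ)) p) ≤ D + δ ∧
      gromovProduct p ((f ^ (-(k : ℤ))) p) ((g ^ n) ((f ^ (k : ℤ)) p)) ≤ D + δ :=
  gromov_product_bound_elliptic_general δ hX w f Aminus hAm g p hp hgA D hDbd
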